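/- Let c and d be integers and let k be a positive integer with k ≡ 3 (mod 4). Then in the ring of Gaussian integers ℤ[i], c − d divides (c + di)^k(1 − i) + (c − di)^k(1 + i), and c + d divides (c + di)^k(1 + i) + (c − di)^k(1 − i). -/

import Mathlib

/-!
Modulo `c - d` we have `c ≡ d`, hence `c ± d i ≡ d (1 ± i)`, and the first sum is congruent to
`d ^ k ((1 + i) ^ k (1 - i) + (1 - i) ^ k (1 + i))`. Since `(1 ± i) ^ 4 = -4`, for `k = 4 m + 3`
this is `(-4) ^ m d ^ k (1 + i) (1 - i) ((1 + i) ^ 2 + (1 - i) ^ 2) = 0`.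
The second divisibility is the first one with `d` replaced by `-d`.
-/

section

variable {R : Type*} [CommRing R] {i : R}

lemma one_add_pow_mul_one_sub_add_one_sub_pow_mul_one_add (hi : i ^ 2 = -1) {k : ℕ}
    (hk : k % 4 = 3) : (1 + i) ^ k * (1 - i) + (1 - i) ^ k * (1 + i) = 0 := by
  obtain ⟨m, rfl⟩ : ∃ m, k = 4 * m + 3 := ⟨k / 4, by omega⟩
  have hplus : (1 + i) ^ 4 = -4 := by linear_combination (i ^ 2 + 4 * i + 5) * hi
  have hminus : (1 - i) ^ 4 = -4 := by linear_combination (i ^ 2 - 4 * i + 5) * hi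
  simp only [pow_add, pow_mul, hplus, hminus]
  linear_combination (-4) ^ m * 2 * (1 - i ^ 2) * hi

lemma sub_dvd_pow_mul_one_sub_add_pow_mul_one_add (hi : i ^ 2 = -1) (c d : R) {k : ℕ}
    (hk : k % 4 = 3) : c - d ∣ (c + d * i) ^ k * (1 - i) + (c - d * i) ^ k * (1 + i) := by
  have hplus := sub_dvd_pow_sub_pow (c + d * i) (d * (1 + i)) k
  have hminus := sub_dvd_pow_sub_pow (c - d * i) (d * (1 - i)) k
  rw [show c + d * i - d * (1 + i) = c - d by ring, mul_pow] at hplus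
  rw [show c - d * i - d * (1 - i) = c - d by ring, mul_pow] at hminus
  convert dvd_add (hplus.mul_right (1 - i)) (hminus.mul_right (1 + i)) using 1
  linear_combination d ^ k * one_add_pow_mul_one_sub_add_one_sub_pow_mul_one_add hi hk

end

lemma GaussianInt.sqrtd_sq : (Zsqrtd.sqrtd : GaussianInt) ^ 2 = -1 := by
  rw [sq, Zsqrtd.dmuld]
  rfl

theorem gaussian_dvd_of_k_mod_four_eq_three_general
    (c d : ℤ) (k : ℕ) (hkmod : k % 4 = 3) :
    (((c - d : ℤ) : GaussianInt) ∣
      ((c : GaussianInt) + (d : GaussianInt) * Zsqrtd.sqrtd) ^ k * (1 - Zsqrtd.sqrtd)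
        + ((c : GaussianInt) - (d : GaussianInt) * Zsqrtd.sqrtd) ^ k * (1 + Zsqrtd.sqrtd))
    ∧ (((c + d : ℤ) : GaussianInt) ∣
      ((c : GaussianInt) + (d : GaussianInt) * Zsqrtd.sqrtd) ^ k * (1 + Zsqrtd.sqrtd)
        + ((c : GaussianInt) - (d : GaussianInt) * Zsqrtd.sqrtd) ^ k * (1 - Zsqrtd.sqrtd)) := by
  have key := sub_dvd_pow_mul_one_sub_add_pow_mul_one_add GaussianInt.sqrtd_sq (c : GaussianInt)
  push_cast
  refine ⟨key d hkmod, ?_⟩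
  convert key (-d) hkmod using 1 <;> ring

/-- For integers `c, d` and a positive integer `k ≡ 3 (mod 4)`, in the Gaussian
integers `c - d` divides `(c+di)^k(1-i) + (c-di)^k(1+i)` and `c + d` divides
`(c+di)^k(1+i) + (c-di)^k(1-i)`. -/
theorem gaussian_dvd_of_k_mod_four_eq_three
    (c d : ℤ) (k : ℕ) (hk : 0 < k) (hkmod : k % 4 = 3) :
    (((c - d : ℤ) : GaussianInt) ∣
      ((c : GaussianInt) + (d : GaussianInt) * Zsqrtd.sqrtd) ^ k * (1 - Zsqrtd.sqrtd)
        + ((c : GaussianInt) - (d : GaussianInt) * Zsqrtd.sqrtd) ^ k * (1 + Zsqrtd.sqrtd))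
    ∧ (((c + d : ℤ) : GaussianInt) ∣
      ((c : GaussianInt) + (d : GaussianInt) * Zsqrtd.sqrtd) ^ k * (1 + Zsqrtd.sqrtd)
        + ((c : GaussianInt) - (d : GaussianInt) * Zsqrtd.sqrtd) ^ k * (1 - Zsqrtd.sqrtd)) :=
  gaussian_dvd_of_k_mod_four_eq_three_general c d k hkmod
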